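/- arXiv:2604.24757 — 5 statements merged into one kernel-verified Lean document; each statement's English description precedes it below -/
import Mathlib

section
/- If g ≥ 0 and the second-moment function (p₁,p₂) ↦ E[X₁(p₁)·X₂(p₂)] exhibits increasing differences, then the payoff U₁(p₁,p₂) = E[−(d₁ + g·X₂(p₂) − X₁(p₁))²] exhibits increasing differences in (p₁, p₂). -/
open MeasureTheory

lemma expand_sq_integral {Ω : Type*} [MeasurableSpace Ω] (P : Measure Ω)
    [IsProbabilityMeasure P] (f₁ f₂ : Ω → ℝ) (d g : ℝ)
    (hf₁ : MemLp f₁ 2 P) (hf₂ : MemLp f₂ 2 P) :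
    ∫ ω, -(d + g * f₂ ω - f₁ ω) ^ 2 ∂P =
      -(d ^ 2) - g ^ 2 * (∫ ω, f₂ ω ^ 2 ∂P) - (∫ ω, f₁ ω ^ 2 ∂P)
        - 2 * d * g * (∫ ω, f₂ ω ∂P) + 2 * d * (∫ ω, f₁ ω ∂P)
        + 2 * g * (∫ ω, f₁ ω * f₂ ω ∂P) := by
  have hB : Integrable (fun ω => g ^ 2 * f₂ ω ^ 2) P := hf₂.integrable_sq.const_mul _
  have hC : Integrable (fun ω => f₁ ω ^ 2) P := hf₁.integrable_sq
  have hD : Integrable (fun ω => 2 * d * g * f₂ ω) P :=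
    (hf₂.integrable one_le_two).const_mul _
  have hE : Integrable (fun ω => 2 * d * f₁ ω) P :=
    (hf₁.integrable one_le_two).const_mul _
  have h12 : Integrable (fun ω => f₁ ω * f₂ ω) P := by
    have h := (((hf₁.add hf₂).integrable_sq.sub
      hf₁.integrable_sq).sub hf₂.integrable_sq).const_mul (1/2 : ℝ)
    refine h.congr (Filter.Eventually.of_forall fun ω => ?_)
    simp only [Pi.add_apply, Pi.sub_apply]; ring
  have hF : Integrable (fun ω => 2 * g * (f₁ ω * f₂ ω)) P := h12.const_mul _
  have hA : Integrable (fun _ : Ω => -(d ^ 2)) P := integrable_const _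
  have hAB : Integrable (fun ω => -(d ^ 2) - g ^ 2 * f₂ ω ^ 2) P := hA.sub hB
  have hABC : Integrable (fun ω => -(d ^ 2) - g ^ 2 * f₂ ω ^ 2 - f₁ ω ^ 2) P := hAB.sub hC
  have hABCD : Integrable
      (fun ω => -(d ^ 2) - g ^ 2 * f₂ ω ^ 2 - f₁ ω ^ 2 - 2 * d * g * f₂ ω) P := hABC.sub hD
  have hABCDE : Integrable (fun ω =>
      -(d ^ 2) - g ^ 2 * f₂ ω ^ 2 - f₁ ω ^ 2 - 2 * d * g * f₂ ω + 2 * d * f₁ ω) P :=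
    hABCD.add hE
  have key : (fun ω => -(d + g * f₂ ω - f₁ ω) ^ 2) =
      fun ω => -(d ^ 2) - g ^ 2 * f₂ ω ^ 2 - f₁ ω ^ 2
        - 2 * d * g * f₂ ω + 2 * d * f₁ ω + 2 * g * (f₁ ω * f₂ ω) := by
    funext ω; ring
  rw [key, integral_add hABCDE hF, integral_add hABCD hE, integral_sub hABC hD,
    integral_sub hAB hC, integral_sub hA hB, integral_const, integral_const_mul,
    integral_const_mul, integral_const_mul, integral_const_mul]
  simp

/-- If `g ≥ 0` and the second-moment function exhibits increasing differences,
then the payoff `U₁` exhibits increasing differences. -/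
theorem payoff_increasing_differences {Ω : Type*} [MeasurableSpace Ω] (P : Measure Ω)
    [IsProbabilityMeasure P] (S : Set ℝ) (X₁ X₂ : ℝ → Ω → ℝ) (d₁ g : ℝ) (hg : 0 ≤ g)
    (h1 : ∀ p ∈ S, MemLp (X₁ p) 2 P) (h2 : ∀ p ∈ S, MemLp (X₂ p) 2 P)
    (hID : ∀ p p' q q' : ℝ, p ∈ S → p' ∈ S → q ∈ S → q' ∈ S → p < p' → q < q' →
      0 ≤ (∫ ω, X₁ p' ω * X₂ q' ω ∂P) - (∫ ω, X₁ p ω * X₂ q' ω ∂P)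
        - (∫ ω, X₁ p' ω * X₂ q ω ∂P) + ∫ ω, X₁ p ω * X₂ q ω ∂P)
    (U₁ : ℝ → ℝ → ℝ)
    (hU : ∀ p q, U₁ p q = ∫ ω, -(d₁ + g * X₂ q ω - X₁ p ω) ^ 2 ∂P) :
    ∀ p p' q q' : ℝ, p ∈ S → p' ∈ S → q ∈ S → q' ∈ S → p < p' → q < q' →
      0 ≤ U₁ p' q' - U₁ p q' - U₁ p' q + U₁ p q := by
  intro p p' q q' hp hp' hq hq' hpp hqq
  have e1 := expand_sq_integral P (X₁ p') (X₂ q') d₁ g (h1 p' hp') (h2 q' hq')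
  have e2 := expand_sq_integral P (X₁ p) (X₂ q') d₁ g (h1 p hp) (h2 q' hq')
  have e3 := expand_sq_integral P (X₁ p') (X₂ q) d₁ g (h1 p' hp') (h2 q hq)
  have e4 := expand_sq_integral P (X₁ p) (X₂ q) d₁ g (h1 p hp) (h2 q hq)
  have hid := hID p p' q q' hp hp' hq hq' hpp hqq
  rw [hU p' q', hU p q', hU p' q, hU p q, e1, e2, e3, e4]
  nlinarith [hid, hg]
end

section
/- In the two-player complex-environment game with common weight g ∈ (0,1) and d₁ > d₂ + 2gk, the interior equilibrium (p₁*, p₂*) satisfies E(X(p₁*)) = (d₁ + g·d₂)/(1−g²) + k/(1+g) and E(X(p₂*)) = (d₂ + g·d₁)/(1−g²) + (1+2g)k/(1+g), so the equilibrium distance is E(X(p₁*)) − E(X(p₂*)) = (d₁ − d₂)/(1+g) − 2gk/(1+g). -/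
/-! The two best responses form the linear system `x = a + g y`, `y = b + g x` with
`a = d₁ + k - 2gk` and `b = d₂ + k`; since `|g| < 1` it has a unique solution, and subtracting
the two equations gives `(1 + g)(x - y) = a - b` for the distance directly. -/

section LinearResponse

variable {g a b x y : ℝ}

lemma eq_of_linear_response (hg : 1 - g ^ 2 ≠ 0) (hx : x = a + g * y) (hy : y = b + g * x) :
    x = (a + g * b) / (1 - g ^ 2) := by
  rw [eq_div_iff hg]
  linear_combination hx + g * hy

lemma sub_eq_of_linear_response (hg : 1 + g ≠ 0) (hx : x = a + g * y) (hy : y = b + g * x) :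
    x - y = (a - b) / (1 + g) := by
  rw [eq_div_iff hg]
  linear_combination hx - hy

end LinearResponse

theorem two_player_complex_equilibrium_general (g k d₁ d₂ p₁ p₂ : ℝ)
    (hg0 : 0 < g) (hg1 : g < 1)
    (E : ℝ → ℝ)
    (h1 : E p₁ = d₁ + g * E p₂ + k - 2 * g * k)
    (h2 : E p₂ = d₂ + g * E p₁ + k) :
    E p₁ = (d₁ + g * d₂) / (1 - g ^ 2) + k / (1 + g) ∧
    E p₂ = (d₂ + g * d₁) / (1 - g ^ 2) + (1 + 2 * g) * k / (1 + g) ∧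
    E p₁ - E p₂ = (d₁ - d₂) / (1 + g) - 2 * g * k / (1 + g) := by
  have hx : E p₁ = (d₁ + k - 2 * g * k) + g * E p₂ := by linear_combination h1
  have hy : E p₂ = (d₂ + k) + g * E p₁ := by linear_combination h2
  have hsq : 1 - g ^ 2 ≠ 0 := by nlinarith
  have hsum : 1 + g ≠ 0 := by positivity
  have hfac : 1 - g ^ 2 = (1 - g) * (1 + g) := by ring
  have hsub : 1 - g ≠ 0 := sub_ne_zero.mpr hg1.ne'
  refine ⟨?_, ?_, ?_⟩
  · rw [eq_of_linear_response hsq hx hy, hfac]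
    field_simp
    ring
  · rw [eq_of_linear_response hsq hy hx, hfac]
    field_simp
    ring
  · rw [sub_eq_of_linear_response hsum hx hy]
    ring

/-- Two-player complex-environment game: interior equilibrium outcomes and distance. -/
theorem two_player_complex_equilibrium (g k μ X₀ p₀ d₁ d₂ p₁ p₂ : ℝ)
    (hg0 : 0 < g) (hg1 : g < 1) (hμ : μ < 0) (hk : 0 < k)
    (hd : d₂ + 2 * g * k < d₁)
    (E : ℝ → ℝ) (hE : ∀ p, E p = X₀ + μ * (p - p₀))
    (h1 : E p₁ = d₁ + g * E p₂ + k - 2 * g * k)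
    (h2 : E p₂ = d₂ + g * E p₁ + k) :
    E p₁ = (d₁ + g * d₂) / (1 - g ^ 2) + k / (1 + g) ∧
    E p₂ = (d₂ + g * d₁) / (1 - g ^ 2) + (1 + 2 * g) * k / (1 + g) ∧
    E p₁ - E p₂ = (d₁ - d₂) / (1 + g) - 2 * g * k / (1 + g) :=
  two_player_complex_equilibrium_general g k d₁ d₂ p₁ p₂ hg0 hg1 E h1 h2
end

section
/- Let G be an n×n nonnegative matrix with zero diagonal such that I − G is invertible, and let M = (I − G)⁻¹. If in an interior equilibrium the expected outcome vector satisfies E(X(p)) = M(d + k·1 − 2k·(G∘F)·1) for a matrix F ∈ [0,1]^{n×n} with F_{ij} + F_{ji} = 1 off-diagonal, then for the uniform network g_{ij} = g (i ≠ j) with p₁ < p₂ < ... < pₙ and F_{ij} = [p_i < p_j], consecutive expected outcomes satisfy E(X_i(p_i)) − E(X_{i+1}(p_{i+1})) = β_i − β_{i+1} − 2gk/(1+g), where β = (I−G)⁻¹ d. -/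
open Matrix

/-- Uniform network: consecutive differences of equilibrium expected outcomes. -/
theorem uniform_network_consecutive_differences (n : ℕ) (hn : 2 ≤ n) (g k : ℝ)
    (hg : 0 < g) (hgn : ((n : ℝ) - 1) * g < 1) (hk : 0 < k)
    (d p : Fin n → ℝ) (hp : StrictMono p)
    (G : Matrix (Fin n) (Fin n) ℝ) (hG : ∀ i j, G i j = if i = j then 0 else g)
    (F : Matrix (Fin n) (Fin n) ℝ) (hF : ∀ i j, F i j = if p i < p j then 1 else 0)
    (x β : Fin n → ℝ)
    (hx : x = (1 - G)⁻¹ *ᵥ (fun i => d i + k - 2 * k * ∑ j, G i j * F i j))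
    (hβ : β = (1 - G)⁻¹ *ᵥ d)
    (i j : Fin n) (hij : (j : ℕ) = (i : ℕ) + 1) :
    x i - x j = β i - β j - 2 * g * k / (1 + g) := by
  have hn1 : (1:ℝ) ≤ (n:ℝ) := by exact_mod_cast Nat.one_le_of_lt hn
  have hg1 : (1:ℝ) + g ≠ 0 := by nlinarith
  have hgn' : (1:ℝ) - ((n:ℝ) - 1) * g ≠ 0 := by nlinarith
  set a : ℝ := 1 / (1 + g) with ha
  set b : ℝ := g / ((1 + g) * (1 - ((n:ℝ) - 1) * g)) with hb
  set B : Matrix (Fin n) (Fin n) ℝ :=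
    Matrix.of (fun i j : Fin n => (if i = j then a else 0) + b) with hBdef
  have hrow : ∀ t : Fin n, (∑ l, G t l) = ((n:ℝ) - 1) * g := by
    intro t
    have h1 : ∀ l : Fin n, G t l = g - (if t = l then g else 0) := by
      intro l; rw [hG]; split <;> ring
    rw [Finset.sum_congr rfl fun l _ => h1 l, Finset.sum_sub_distrib,
      Finset.sum_const, Finset.sum_ite_eq, if_pos (Finset.mem_univ t)]
    simp [Finset.card_univ]
    ring
  have hAB : (1 - G) * B = 1 := by
    ext s t
    rw [Matrix.mul_apply]
    have h1 : ∀ l, (1 - G) s l * B l t =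
        ((if s = l then 1 else 0) * (if l = t then a else 0)
          + (if s = l then b else 0))
        - (if l = t then G s l * a else 0) - G s l * b := by
      intro l
      simp only [hBdef, Matrix.sub_apply, Matrix.one_apply, Matrix.of_apply]
      split_ifs <;> ring
    rw [Finset.sum_congr rfl fun l _ => h1 l]
    rw [Finset.sum_sub_distrib, Finset.sum_sub_distrib, Finset.sum_add_distrib]
    have e1 : (∑ l : Fin n, (if s = l then (1:ℝ) else 0) * if l = t then a else 0)
        = if s = t then a else 0 := by
      simp [ite_mul, Finset.sum_ite_eq]
    have e2 : (∑ l : Fin n, G s l * b) = ((n:ℝ) - 1) * g * b := by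
      rw [← Finset.sum_mul, hrow]
    rw [Finset.sum_ite_eq, if_pos (Finset.mem_univ s), Finset.sum_ite_eq', if_pos (Finset.mem_univ t),
      e1, e2]
    have hG' : G s t = if s = t then 0 else g := hG s t
    by_cases hst : s = t
    · subst hst
      rw [if_pos rfl, Matrix.one_apply_eq, hG s s, if_pos rfl]
      field_simp [ha, hb]
      have hbc : b * (1 - ((n:ℝ) - 1) * g) = g / (1 + g) := by rw [hb, div_mul_eq_mul_div, mul_comm (1 + g), ← div_div, mul_div_cancel_right₀ _ hgn']
      have ha2 : 1 / (1 + g) + g / (1 + g) = 1 := by rw [← add_div, div_self hg1]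
      linear_combination ha + hbc + ha2
    · simp only [if_neg hst, Matrix.one_apply_ne hst]
      rw [hG s t, if_neg hst]
      field_simp [ha, hb]
      have hbc : b * (1 - ((n:ℝ) - 1) * g) = g / (1 + g) := by rw [hb, div_mul_eq_mul_div, mul_comm (1 + g), ← div_div, mul_div_cancel_right₀ _ hgn']
      linear_combination hbc - g * ha
  have hBinv : (1 - G)⁻¹ = B := Matrix.inv_eq_right_inv hAB
  -- decompose x
  set u : Fin n → ℝ := fun t => k - 2 * k * ∑ m, G t m * F t m with hu
  have hxsplit : ∀ t, x t = β t + (B *ᵥ u) t := by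
    intro t
    have : (fun s => d s + k - 2 * k * ∑ m, G s m * F s m) = d + u := by
      funext s; simp [hu]; ring
    rw [hx, hβ, hBinv, this, Matrix.mulVec_add, Pi.add_apply]
  -- compute B *ᵥ u entries
  have hBu : ∀ t, (B *ᵥ u) t = a * u t + b * ∑ m, u m := by
    intro t
    rw [Matrix.mulVec, dotProduct]
    have h1 : ∀ l, B t l * u l = (if t = l then a else 0) * u l + b * u l := by
      intro l; simp only [hBdef, Matrix.of_apply]; ring
    rw [Finset.sum_congr rfl fun l _ => h1 l, Finset.sum_add_distrib, ← Finset.mul_sum]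
    congr 1
    simp [ite_mul, Finset.sum_ite_eq]
  -- compute the sums ∑ G t m * F t m
  have hsum : ∀ t : Fin n, (∑ m, G t m * F t m) =
      g * ((Finset.univ.filter (fun m : Fin n => t < m)).card : ℝ) := by
    intro t
    have h1 : ∀ m, G t m * F t m = if t < m then g else 0 := by
      intro m
      rw [hG, hF]
      by_cases h : t < m
      · rw [if_pos (hp.lt_iff_lt.mpr h), if_neg (ne_of_lt h), mul_one, if_pos h]
      · rw [if_neg (fun hc => h (hp.lt_iff_lt.mp hc)), mul_zero, if_neg h]
    rw [Finset.sum_congr rfl fun m _ => h1 m, ← Finset.sum_filter, Finset.sum_const,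
      nsmul_eq_mul, mul_comm]
  have hijlt : i < j := by rw [Fin.lt_def]; omega
  have hcard : (Finset.univ.filter (fun m : Fin n => i < m)).card =
      (Finset.univ.filter (fun m : Fin n => j < m)).card + 1 := by
    have hset : (Finset.univ.filter (fun m : Fin n => i < m)) =
        insert j (Finset.univ.filter (fun m : Fin n => j < m)) := by
      ext m
      simp only [Finset.mem_insert, Finset.mem_filter, Finset.mem_univ, true_and]
      rw [Fin.lt_def, Fin.lt_def, Fin.ext_iff]
      omega
    rw [hset, Finset.card_insert_of_notMem]
    simp
  have hudiff : u i - u j = -(2 * g * k) := by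
    rw [hu]
    simp only [hsum, hcard]
    push_cast
    ring
  have := hxsplit i
  have := hxsplit j
  rw [hxsplit i, hxsplit j, hBu i, hBu j]
  have : a * u i + b * ∑ m, u m - (a * u j + b * ∑ m, u m) = a * (u i - u j) := by ring
  have key : β i + (a * u i + b * ∑ m, u m) - (β j + (a * u j + b * ∑ m, u m))
      = β i - β j + a * (u i - u j) := by ring
  rw [key, hudiff, ha]
  field_simp
  ring
end

section
/- The function V(p) = Σ_i [d_i·E(X_i(p_i)) − (1/2)E(X_i(p_i)²)] + (1/2)Σ_{i,j} g_{ij}·E(X_i(p_i)X_j(p_j)), where E(X_i(p)) = X₀ + μ(p−p₀), E(X_i(p)²) = (X₀+μ(p−p₀))² + σ²(p−p₀), and E(X_i(p_i)X_j(p_j)) = E(X_i(p_i))E(X_j(p_j)) + σ²·min{p_i−p₀, p_j−p₀} for i≠j, is strictly concave on [p₀,∞)ⁿ whenever G is symmetric nonnegative with zero diagonal and I − G is positive definite. -/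
/-- The potential `V` is strictly concave on `[p₀,∞)ⁿ` when `G` is symmetric nonnegative
with zero diagonal and `I − G` is positive definite. -/
theorem potential_strictly_concave (n : ℕ) (μ σ2 X₀ p₀ : ℝ) (hμ : μ < 0) (hσ : 0 < σ2)
    (G : Matrix (Fin n) (Fin n) ℝ) (hGsymm : G.IsSymm) (hGnn : ∀ i j, 0 ≤ G i j)
    (hGd : ∀ i, G i i = 0) (hPD : (1 - G).PosDef)
    (d : Fin n → ℝ) (m : ℝ → ℝ) (hm : ∀ p, m p = X₀ + μ * (p - p₀))
    (V : (Fin n → ℝ) → ℝ)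
    (hV : ∀ p, V p
      = (∑ i, (d i * m (p i) - (1 / 2) * ((m (p i)) ^ 2 + σ2 * (p i - p₀))))
        + (1 / 2) * ∑ i, ∑ j,
            G i j * (m (p i) * m (p j) + σ2 * min (p i - p₀) (p j - p₀))) :
    StrictConcaveOn ℝ {p : Fin n → ℝ | ∀ i, p₀ ≤ p i} V := by
  constructor
  · have h : {p : Fin n → ℝ | ∀ i, p₀ ≤ p i} = Set.pi Set.univ (fun _ => Set.Ici p₀) := by
      ext p
      simp only [Set.mem_setOf_eq, Set.mem_pi, Set.mem_univ, Set.mem_Ici, forall_true_left]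
    rw [h]
    exact convex_pi fun i _ => convex_Ici p₀
  · intro x hx y hy hxy a b ha hb hab
    simp only [smul_eq_mul, Pi.add_apply, Pi.smul_apply]
    have hb' : b = 1 - a := by linarith
    set z : Fin n → ℝ := a • x + b • y with hz
    have hzi : ∀ i, z i = a * x i + b * y i := fun i => rfl
    set w : Fin n → ℝ := fun i => m (x i) - m (y i) with hw
    have hwi : ∀ i, w i = m (x i) - m (y i) := fun i => rfl
    -- w ≠ 0
    have hwne : w ≠ 0 := by
      intro h0
      apply hxy
      funext i
      have h1 : w i = 0 := congrFun h0 i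
      rw [hwi i, hm, hm] at h1
      have h2 : μ * (x i - p₀) = μ * (y i - p₀) := by linarith
      have h3 := mul_left_cancel₀ (ne_of_lt hμ) h2
      linarith
    -- positivity of the quadratic form
    have hquad : 0 < (∑ i, (w i) ^ 2) - ∑ i, ∑ j, G i j * (w i * w j) := by
      have hpd := hPD.dotProduct_mulVec_pos hwne
      have heq : dotProduct (star w) ((1 - G).mulVec w)
          = (∑ i, (w i) ^ 2) - ∑ i, ∑ j, G i j * (w i * w j) := by
        simp only [dotProduct, Matrix.mulVec, Pi.star_apply, star_trivial]
        have hrow : ∀ i, (∑ j, ((1 - G) i j) * w j) = w i - ∑ j, G i j * w j := by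
          intro i
          simp only [Matrix.sub_apply, Matrix.one_apply, sub_mul, ite_mul, one_mul, zero_mul]
          rw [Finset.sum_sub_distrib, Finset.sum_ite_eq (Finset.univ) i w]
          simp
        calc (∑ i, w i * ∑ j, ((1 - G) i j) * w j)
            = ∑ i, (w i * w i - w i * ∑ j, G i j * w j) := by
              apply Finset.sum_congr rfl; intro i _; rw [hrow i]; ring
          _ = (∑ i, (w i) ^ 2) - ∑ i, ∑ j, G i j * (w i * w j) := by
              rw [Finset.sum_sub_distrib]
              congr 1
              · apply Finset.sum_congr rfl; intro i _; ring
              · apply Finset.sum_congr rfl; intro i _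
                rw [Finset.mul_sum]
                apply Finset.sum_congr rfl; intro j _; ring
      rw [heq] at hpd
      exact hpd
    -- mean is affine
    have hmz : ∀ i, m (z i) = a * m (x i) + b * m (y i) := by
      intro i
      rw [hm, hm, hm, hzi i, hb']; ring
    rw [hV x, hV y, hV z]
    -- first sum identity
    have hA : (∑ i, (d i * m (z i) - (1 / 2) * ((m (z i)) ^ 2 + σ2 * (z i - p₀))))
        = a * (∑ i, (d i * m (x i) - (1 / 2) * ((m (x i)) ^ 2 + σ2 * (x i - p₀))))
          + b * (∑ i, (d i * m (y i) - (1 / 2) * ((m (y i)) ^ 2 + σ2 * (y i - p₀))))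
          + (a * b / 2) * ∑ i, (w i) ^ 2 := by
      rw [Finset.mul_sum, Finset.mul_sum, Finset.mul_sum, ← Finset.sum_add_distrib,
        ← Finset.sum_add_distrib]
      apply Finset.sum_congr rfl
      intro i _
      rw [hmz i, hzi i, hwi i, hb']
      ring
    -- second sum inequality
    have hB : a * (∑ i, ∑ j, G i j * (m (x i) * m (x j) + σ2 * min (x i - p₀) (x j - p₀)))
        + b * (∑ i, ∑ j, G i j * (m (y i) * m (y j) + σ2 * min (y i - p₀) (y j - p₀)))
        - a * b * ∑ i, ∑ j, G i j * (w i * w j)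
        ≤ ∑ i, ∑ j, G i j * (m (z i) * m (z j) + σ2 * min (z i - p₀) (z j - p₀)) := by
      have hlhs : a * (∑ i, ∑ j, G i j * (m (x i) * m (x j) + σ2 * min (x i - p₀) (x j - p₀)))
          + b * (∑ i, ∑ j, G i j * (m (y i) * m (y j) + σ2 * min (y i - p₀) (y j - p₀)))
          - a * b * ∑ i, ∑ j, G i j * (w i * w j)
          = ∑ i, ∑ j, (a * (G i j * (m (x i) * m (x j) + σ2 * min (x i - p₀) (x j - p₀)))
              + b * (G i j * (m (y i) * m (y j) + σ2 * min (y i - p₀) (y j - p₀)))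
              - a * b * (G i j * (w i * w j))) := by
        simp only [Finset.mul_sum, Finset.sum_add_distrib, Finset.sum_sub_distrib, mul_assoc]
      rw [hlhs]
      apply Finset.sum_le_sum
      intro i _
      apply Finset.sum_le_sum
      intro j _
      have hmin : a * min (x i - p₀) (x j - p₀) + b * min (y i - p₀) (y j - p₀)
          ≤ min (z i - p₀) (z j - p₀) := by
        have hsi : a * (x i - p₀) + b * (y i - p₀) = a * x i + b * y i - p₀ := by
          rw [hb']; ring
        have hsj : a * (x j - p₀) + b * (y j - p₀) = a * x j + b * y j - p₀ := by
          rw [hb']; ring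
        apply le_min
        · rw [hzi i]
          have h1 := mul_le_mul_of_nonneg_left (min_le_left (x i - p₀) (x j - p₀)) ha.le
          have h2 := mul_le_mul_of_nonneg_left (min_le_left (y i - p₀) (y j - p₀)) hb.le
          linarith
        · rw [hzi j]
          have h1 := mul_le_mul_of_nonneg_left (min_le_right (x i - p₀) (x j - p₀)) ha.le
          have h2 := mul_le_mul_of_nonneg_left (min_le_right (y i - p₀) (y j - p₀)) hb.le
          linarith
      have hpos : 0 ≤ G i j * σ2 *
          (min (z i - p₀) (z j - p₀)
            - (a * min (x i - p₀) (x j - p₀) + b * min (y i - p₀) (y j - p₀))) :=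
        mul_nonneg (mul_nonneg (hGnn i j) hσ.le) (by linarith)
      have hprod : m (z i) * m (z j)
          = a * (m (x i) * m (x j)) + b * (m (y i) * m (y j)) - a * b * (w i * w j) := by
        rw [hmz i, hmz j, hwi i, hwi j, hb']; ring
      rw [hprod]
      nlinarith [hpos]
    have habpos : 0 < a * b / 2 := by positivity
    nlinarith [hA, hB, mul_pos habpos hquad]
end

section
/- In the two-player symmetric game with ĝ ∈ (0, 1/2), d₁ ≥ d₂, and all equilibria interior: if d₁ < d₂ + 2ĝk then the set of equilibria is exactly { (s,s) : s ∈ [L, U] } where L = (d₂/(1−ĝ))/μ − X₀/μ − (1/(1−ĝ))·σ²/(2μ²) and U = (d₁/(1−ĝ))/μ − X₀/μ − ((1−2ĝ)/(1−ĝ))·σ²/(2μ²); in particular, since μ < 0, U − L = (d₁−d₂)/(μ(1−ĝ)) + (2ĝ/(1−ĝ))·σ²/(2μ²) ≥ 0 if and only if d₁ ≤ d₂ + 2ĝk. -/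
private lemma neg_mul_flip {μ a b : ℝ} (hμ : μ < 0) (h : μ * a ≤ μ * b) : b ≤ a := by
  by_contra hc
  push_neg at hc
  nlinarith [mul_pos (neg_pos.mpr hμ) (sub_pos.mpr hc)]

set_option maxHeartbeats 1600000 in
/-- Two-player symmetric game with `ĝ ∈ (0,1/2)`, `d₁ ≥ d₂`, and `d₁ < d₂ + 2ĝk`:
the set of equilibria is exactly `{(s,s) : s ∈ [L,U]}`; moreover
`U − L = (d₁−d₂)/(μ(1−ĝ)) + (2ĝ/(1−ĝ))·σ²/(2μ²)` and `L ≤ U ↔ d₁ ≤ d₂ + 2ĝk`. -/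
theorem symmetric_equilibrium_interval (μ σ2 X₀ d₁ d₂ g : ℝ) (hμ : μ < 0) (hσ : 0 < σ2)
    (hg0 : 0 < g) (hg1 : g < 1 / 2) (hd : d₂ ≤ d₁)
    (k : ℝ) (hk : k = σ2 / (2 * (-μ)))
    (E : ℝ → ℝ) (hE : ∀ s, E s = X₀ + μ * s)
    (L U : ℝ)
    (hL : L = (d₂ / (1 - g)) / μ - X₀ / μ - (1 / (1 - g)) * σ2 / (2 * μ ^ 2))
    (hU : U = (d₁ / (1 - g)) / μ - X₀ / μ - ((1 - 2 * g) / (1 - g)) * σ2 / (2 * μ ^ 2))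
    (hdk : d₁ < d₂ + 2 * g * k)
    (Equil : ℝ → ℝ → Prop)
    (hEq : ∀ p₁ p₂, Equil p₁ p₂ ↔ ∃ f₁₂ f₂₁ : ℝ,
      0 ≤ f₁₂ ∧ f₁₂ ≤ 1 ∧ 0 ≤ f₂₁ ∧ f₂₁ ≤ 1 ∧
      (p₁ < p₂ → f₁₂ = 1 ∧ f₂₁ = 0) ∧ (p₂ < p₁ → f₂₁ = 1 ∧ f₁₂ = 0) ∧
      E p₁ = d₁ + g * E p₂ + k - 2 * g * k * f₁₂ ∧
      E p₂ = d₂ + g * E p₁ + k - 2 * g * k * f₂₁) :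
    (∀ p₁ p₂, Equil p₁ p₂ ↔ (p₁ = p₂ ∧ L ≤ p₁ ∧ p₁ ≤ U)) ∧
    U - L = (d₁ - d₂) / (μ * (1 - g)) + (2 * g / (1 - g)) * σ2 / (2 * μ ^ 2) ∧
    (L ≤ U ↔ d₁ ≤ d₂ + 2 * g * k) := by
  have hg2 : (0:ℝ) < 1 - g := by linarith
  have hg2' : (1:ℝ) - g ≠ 0 := ne_of_gt hg2
  have hμ' : (0:ℝ) < -μ := by linarith
  have hμ0 : μ ≠ 0 := ne_of_lt hμ
  have hk0 : 0 < k := by rw [hk]; positivity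
  have hgk : 0 < 2 * g * k := by positivity
  have hLs : (1 - g) * (X₀ + μ * L) = d₂ + k := by
    rw [hL, hk]; field_simp; ring
  have hUs : (1 - g) * (X₀ + μ * U) = d₁ + k - 2 * g * k := by
    rw [hU, hk]; field_simp; ring
  refine ⟨?_, ?_, ?_⟩
  · intro p₁ p₂
    rw [hEq]
    constructor
    · rintro ⟨f₁₂, f₂₁, hf1, hf2, hf3, hf4, hlt1, hlt2, he1, he2⟩
      rw [hE, hE] at he1 he2
      rcases lt_trichotomy p₁ p₂ with h | h | h
      · obtain ⟨e1, e2⟩ := hlt1 h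
        subst e1; subst e2
        have hmul : μ * p₂ < μ * p₁ := by
          nlinarith [mul_pos hμ' (sub_pos.mpr h)]
        nlinarith
      · subst h
        have hA2 : (1 - g) * (X₀ + μ * p₁) = d₂ + k - 2 * g * k * f₂₁ := by
          linear_combination he2
        have hA1 : (1 - g) * (X₀ + μ * p₁) = d₁ + k - 2 * g * k * f₁₂ := by
          linear_combination he1
        have hb1 : 0 ≤ 2 * g * k * f₂₁ := mul_nonneg hgk.le hf3
        have hb2 : 2 * g * k * f₁₂ ≤ 2 * g * k := mul_le_of_le_one_right hgk.le hf2
        refine ⟨rfl, ?_, ?_⟩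
        · have h1 : (1 - g) * (X₀ + μ * p₁) ≤ (1 - g) * (X₀ + μ * L) := by
            rw [hLs]; linarith
          have h2 : X₀ + μ * p₁ ≤ X₀ + μ * L := le_of_mul_le_mul_left h1 hg2
          exact neg_mul_flip hμ (by linarith)
        · have h1 : (1 - g) * (X₀ + μ * U) ≤ (1 - g) * (X₀ + μ * p₁) := by
            rw [hUs]; linarith
          have h2 : X₀ + μ * U ≤ X₀ + μ * p₁ := le_of_mul_le_mul_left h1 hg2
          exact neg_mul_flip hμ (by linarith)
      · obtain ⟨e1, e2⟩ := hlt2 h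
        subst e1; subst e2
        have hmul : μ * p₁ < μ * p₂ := by
          nlinarith [mul_pos hμ' (sub_pos.mpr h)]
        nlinarith
    · rintro ⟨heq, h1, h2⟩
      subst heq
      have hm1 : μ * p₁ ≤ μ * L := mul_le_mul_of_nonpos_left h1 hμ.le
      have hm2 : μ * U ≤ μ * p₁ := mul_le_mul_of_nonpos_left h2 hμ.le
      have hs_le : (1 - g) * (X₀ + μ * p₁) ≤ d₂ + k := by
        nlinarith [mul_le_mul_of_nonneg_left hm1 hg2.le]
      have hs_ge : d₁ + k - 2 * g * k ≤ (1 - g) * (X₀ + μ * p₁) := by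
        nlinarith [mul_le_mul_of_nonneg_left hm2 hg2.le]
      refine ⟨(d₁ + k - (1 - g) * (X₀ + μ * p₁)) / (2 * g * k),
              (d₂ + k - (1 - g) * (X₀ + μ * p₁)) / (2 * g * k),
              ?_, ?_, ?_, ?_, ?_, ?_, ?_, ?_⟩
      · exact div_nonneg (by linarith) hgk.le
      · rw [div_le_one hgk]; linarith
      · exact div_nonneg (by linarith) hgk.le
      · rw [div_le_one hgk]; linarith
      · intro h; exact absurd h (lt_irrefl _)
      · intro h; exact absurd h (lt_irrefl _)
      · rw [hE]
        rw [mul_comm (2 * g * k), div_mul_cancel₀ _ (ne_of_gt hgk)]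
        ring
      · rw [hE]
        rw [mul_comm (2 * g * k), div_mul_cancel₀ _ (ne_of_gt hgk)]
        ring
  · rw [hL, hU]; field_simp; ring
  · have key : U - L = (d₂ + 2 * g * k - d₁) / ((1 - g) * (-μ)) := by
      rw [hL, hU, hk]; field_simp; ring
    have hden : 0 < (1 - g) * (-μ) := mul_pos hg2 hμ'
    constructor
    · intro h
      have h0 : 0 ≤ (d₂ + 2 * g * k - d₁) / ((1 - g) * (-μ)) := by linarith [key]
      rw [le_div_iff₀ hden] at h0
      linarith
    · intro h
      have h0 : 0 ≤ (d₂ + 2 * g * k - d₁) / ((1 - g) * (-μ)) :=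
        div_nonneg (by linarith) hden.le
      linarith [key]
end
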